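/- For every vertex o reachable from s and every iteration t with dist(s,o) ≤ t ≤ dist(s,o)+δ, the truncated Bellman–Ford iterate satisfies y⁽ᵗ⁾(o) = ∑_{ℓ=dist(s,o)}^{t} ∑_{p ∈ P_ℓ(s,o)} weight(p), where P_ℓ(s,o) denotes the set of walks of length ℓ from s to o in G. In particular, the hidden representation at iteration dist(s,o)+k contains exactly the walks of lengths dist(s,o) through dist(s,o)+k, for each 0 ≤ k ≤ δ. -/

import Mathlib

/-!
With `A` the weighted adjacency matrix, the walk sum `pathSum G wt ℓ s o` is the entry
`(A ^ ℓ) s o`, so the cumulative sums `W t = ∑_{ℓ ≤ t} A ^ ℓ` satisfy the untruncated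
Bellman–Ford recursion `W (t + 1) = W t * A + 1`. As long as `t ≤ dist(s,o) + δ`, the
truncation never changes the value at `o`: a neighbour `u` it discards is unreachable from `s`
or has `dist(s,u) ≥ dist(s,o) + δ ≥ t`, so there are no walks of length `< t` from `s` to `u`;
and while `o` is not updated (it is unreachable, or `t < dist(s,o)`) there are no walks of
length `t` from `s` to `o` either, so `W t s o` does not change. Hence `y⁽ᵗ⁾(o) = W t s o` by
induction on `t`, and the terms with `ℓ < dist(s,o)` of `W t s o` vanish.
-/

open Finset

/-- The weight of a walk: the product of the edge weights `wt v_{i-1} v_i` along the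
walk, with the length-0 walk having weight 1. -/
def SimpleGraph.Walk.weight {V : Type*} {G : SimpleGraph V} {R : Type*} [CommSemiring R]
    (wt : V → V → R) {u v : V} (p : G.Walk u v) : R :=
  (p.darts.map fun d => wt d.fst d.snd).prod

/-- `pathSum G wt t s o = ∑_{p ∈ P_t(s,o)} weight(p)`, the sum of the weights of all
walks of length `t` from `s` to `o` in `G`. -/
def pathSum {V : Type*} [Fintype V] [DecidableEq V] (G : SimpleGraph V) [DecidableRel G.Adj]
    {R : Type*} [CommSemiring R] (wt : V → V → R) (t : ℕ) (s o : V) : R :=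
  ∑ p ∈ G.finsetWalkLength t s o, p.weight wt

open Classical in
/-- The truncated Bellman–Ford iterates `y_δ⁽ᵗ⁾` with source `s` and offset `δ`:
`y⁽⁰⁾(o) = 1` if `o = s` and `0` otherwise; for `t ≥ 1`, if `o` is reachable from `s`
and `dist(s,o) ≤ t ≤ dist(s,o) + δ` then `o` aggregates, over the constrained edge set
(neighbors `u` reachable from `s` with `dist(s,u) < dist(s,o) + δ`), the messages
`y⁽ᵗ⁻¹⁾(u) * wt u o`, plus `y⁽⁰⁾(o)`; otherwise `y⁽ᵗ⁾(o) = y⁽ᵗ⁻¹⁾(o)`. -/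
noncomputable def truncBF {V : Type*} [Fintype V] (G : SimpleGraph V)
    {R : Type*} [CommSemiring R] (wt : V → V → R) (s : V) (δ : ℕ) : ℕ → V → R
  | 0 => fun o => if o = s then 1 else 0
  | (t + 1) => fun o =>
      if G.Reachable s o ∧ G.dist s o ≤ t + 1 ∧ t + 1 ≤ G.dist s o + δ then
        (∑ u ∈ Finset.univ.filter
            (fun u => G.Adj u o ∧ G.Reachable s u ∧ G.dist s u < G.dist s o + δ),
          truncBF G wt s δ t u * wt u o) + (if o = s then 1 else 0)
      else truncBF G wt s δ t o

namespace SimpleGraph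

variable {V R : Type*} (G : SimpleGraph V) [DecidableRel G.Adj] (wt : V → V → R)

def weightedAdjMatrix [Zero R] : Matrix V V R :=
  Matrix.of fun u v => if G.Adj u v then wt u v else 0

variable {G wt}

theorem weightedAdjMatrix_apply_of_adj [Zero R] {u v : V} (h : G.Adj u v) :
    G.weightedAdjMatrix wt u v = wt u v :=
  if_pos h

theorem adj_of_weightedAdjMatrix_apply_ne_zero [Zero R] {u v : V}
    (h : G.weightedAdjMatrix wt u v ≠ 0) : G.Adj u v :=
  of_not_not fun hn => h (if_neg hn)

variable [Fintype V] [DecidableEq V] [CommSemiring R]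

theorem reachable_and_dist_le_of_pathSum_ne_zero {t : ℕ} {s o : V}
    (h : pathSum G wt t s o ≠ 0) : G.Reachable s o ∧ G.dist s o ≤ t := by
  obtain ⟨p, hp, -⟩ := exists_ne_zero_of_sum_ne_zero h
  exact ⟨⟨p⟩, mem_finsetWalkLength_iff.mp hp ▸ dist_le p⟩

theorem pathSum_zero (s o : V) : pathSum G wt 0 s o = if o = s then 1 else 0 := by
  obtain rfl | h := eq_or_ne o s
  · simp [pathSum, finsetWalkLength, Walk.weight]
  · simp [pathSum, finsetWalkLength, h, h.symm]

theorem pathSum_succ (t : ℕ) (s o : V) :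
    pathSum G wt (t + 1) s o = ∑ u ∈ G.neighborFinset s, wt s u * pathSum G wt t u o := by
  rw [pathSum, finsetWalkLength, sum_biUnion]
  · rw [neighborFinset_def, ← sum_set_coe]
    refine sum_congr rfl fun u _ => ?_
    simp only [sum_map, pathSum, mul_sum]
    rfl
  · rintro ⟨u, hu⟩ - ⟨v, hv⟩ - huv
    refine Finset.disjoint_left.mpr fun p hpu hpv => huv ?_
    obtain ⟨q, -, rfl⟩ := mem_map.mp hpu
    obtain ⟨r, -, hr⟩ := mem_map.mp hpv
    cases hr
    rfl

theorem pathSum_eq_weightedAdjMatrix_pow_apply (t : ℕ) (s o : V) :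
    pathSum G wt t s o = (G.weightedAdjMatrix wt ^ t) s o := by
  induction t generalizing s with
  | zero => simp [pathSum_zero, Matrix.one_apply, eq_comm]
  | succ t ih =>
    simp only [pathSum_succ, ih, pow_succ', Matrix.mul_apply, weightedAdjMatrix, Matrix.of_apply,
      ite_mul, zero_mul, sum_ite, sum_const_zero, add_zero, neighborFinset_eq_filter]

theorem pathSum_succ' (t : ℕ) (s o : V) :
    pathSum G wt (t + 1) s o = ∑ u, pathSum G wt t s u * G.weightedAdjMatrix wt u o := by
  simp only [pathSum_eq_weightedAdjMatrix_pow_apply, pow_succ, Matrix.mul_apply]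

theorem sum_range_pathSum_succ (t : ℕ) (s o : V) :
    ∑ ℓ ∈ range (t + 2), pathSum G wt ℓ s o =
      ∑ u, (∑ ℓ ∈ range (t + 1), pathSum G wt ℓ s u) * G.weightedAdjMatrix wt u o +
        if o = s then 1 else 0 := by
  simp only [sum_range_succ' _ (t + 1), pathSum_succ', pathSum_zero, sum_mul]
  rw [sum_comm]

end SimpleGraph

section

open SimpleGraph

variable {V R : Type*} [Fintype V] [DecidableEq V] {G : SimpleGraph V} [DecidableRel G.Adj]
  [CommSemiring R] {wt : V → V → R} {s : V} {δ : ℕ}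

theorem truncBF_eq_sum_range_pathSum {t : ℕ} {o : V} (ht : t ≤ G.dist s o + δ) :
    truncBF G wt s δ t o = ∑ ℓ ∈ range (t + 1), pathSum G wt ℓ s o := by
  induction t generalizing o with
  | zero => simp [truncBF, pathSum_zero]
  | succ t ih =>
    rw [truncBF]
    beta_reduce
    by_cases hupdate : G.Reachable s o ∧ G.dist s o ≤ t + 1 ∧ t + 1 ≤ G.dist s o + δ
    · rw [if_pos hupdate, filter_congr_decidable, sum_range_pathSum_succ]
      congr 1
      · refine (sum_congr rfl fun u hu => ?_).trans (sum_filter_of_ne fun u _ hne => ?_)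
        · have hadj := (mem_filter.mp hu).2.1
          have hdist : G.dist s o ≤ G.dist s u + 1 :=
            (dist_eq_one_iff_adj.mpr hadj) ▸ hadj.reachable.dist_triangle_right s
          rw [ih (by omega), weightedAdjMatrix_apply_of_adj hadj]
        · obtain ⟨ℓ, hℓ, hne'⟩ := exists_ne_zero_of_sum_ne_zero (left_ne_zero_of_mul hne)
          obtain ⟨hr, hdist⟩ := reachable_and_dist_le_of_pathSum_ne_zero hne'
          exact ⟨adj_of_weightedAdjMatrix_apply_ne_zero (right_ne_zero_of_mul hne), hr,
            by simp only [mem_range] at hℓ; omega⟩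
      · -- the two sides differ only in the `Decidable (o = s)` instance
        congr
    · have hvanish : pathSum G wt (t + 1) s o = 0 := by
        by_contra hne
        obtain ⟨hr, hdist⟩ := reachable_and_dist_le_of_pathSum_ne_zero hne
        exact hupdate ⟨hr, hdist, ht⟩
      rw [if_neg hupdate, sum_range_succ, hvanish, add_zero, ih (by omega)]

end

theorem truncBF_iterate_eq_pathSum_general {V : Type*} [Fintype V] [DecidableEq V]
    (G : SimpleGraph V) [DecidableRel G.Adj] {R : Type*} [CommSemiring R]
    (wt : V → V → R) (s : V) (δ : ℕ) (o : V)
    (t : ℕ) (h₂ : t ≤ G.dist s o + δ) :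
    truncBF G wt s δ t o = ∑ ℓ ∈ Finset.Icc (G.dist s o) t, pathSum G wt ℓ s o := by
  rw [truncBF_eq_sum_range_pathSum h₂, Nat.range_succ_eq_Icc_zero]
  refine (sum_subset (Icc_subset_Icc_left (Nat.zero_le _)) fun ℓ hℓ hℓ' => ?_).symm
  by_contra hne
  exact hℓ' (mem_Icc.mpr ⟨(G.reachable_and_dist_le_of_pathSum_ne_zero hne).2, (mem_Icc.mp hℓ).2⟩)

/-- For every vertex `o` reachable from `s` and every iteration `t`
with `dist(s,o) ≤ t ≤ dist(s,o) + δ`, the truncated Bellman–Ford iterate satisfies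
`y⁽ᵗ⁾(o) = ∑_{ℓ=dist(s,o)}^{t} ∑_{p ∈ P_ℓ(s,o)} weight(p)`. -/
theorem truncBF_iterate_eq_pathSum {V : Type*} [Fintype V] [DecidableEq V]
    (G : SimpleGraph V) [DecidableRel G.Adj] {R : Type*} [CommSemiring R]
    (wt : V → V → R) (s : V) (δ : ℕ) (o : V) (h : G.Reachable s o)
    (t : ℕ) (h₁ : G.dist s o ≤ t) (h₂ : t ≤ G.dist s o + δ) :
    truncBF G wt s δ t o = ∑ ℓ ∈ Finset.Icc (G.dist s o) t, pathSum G wt ℓ s o :=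
  truncBF_iterate_eq_pathSum_general G wt s δ o t h₂
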